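/- arXiv:2409.04400 — 2 statements merged into one kernel-verified Lean document; each statement's English description precedes it below -/
import Mathlib

section
/- Let (A, I) be a transversal prism and r ≥ 1, with I_r = I·φ(I)···φ^{r-1}(I) and J_r = I·I_r^{p-1}. Then the square of commutative rings A/(J_r·(φ^r)(I)) → A/(φ^r)(I), A/(J_r·(φ^r)(I)) → A/J_r, mapping to A/(J_r + (φ^r)(I)), is Cartesian: A/(J_r·(φ^r)(I)) ≅ A/J_r ×_{A/(J_r+(φ^r)(I))} A/(φ^r)(I). -/
/-!
With `I = (d)` and `fᵢ = φⁱ(d)` all ideals in the square are principal: `J_r = (d ∏_{j<r} fⱼ^(p-1))`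
and `φ^r(I) = (f_r)`. Surjectivity onto the fibre product holds for any two ideals, so the square
is cartesian as soon as `J_r ∩ (f_r) = J_r · (f_r)`, i.e. as soon as `f_r` is a nonzerodivisor
modulo `d ∏_{j<r} fⱼ^(p-1)`.

Inductively every `fᵢ` is a nonzerodivisor with `A/fᵢ` being `p`-torsion-free: applying `φⁱ` to
`p ∈ (d, φ(d))` and using `f_{i+1} = fᵢ^p + p δ(fᵢ)` shows that `δ(fᵢ)` is a unit, and
`(p, d)`-adic separatedness converts divisibility by all powers of `fᵢ` into vanishing.
Moreover `f_r ≡ p · (unit) mod fⱼ` for `j < r`, so `f_r` is regular modulo every `fⱼ`,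
hence modulo their products.
-/

/-- The `n`-fold composite of a ring endomorphism. -/
def iterHom {A : Type*} [CommRing A] (φ : A →+* A) : ℕ → (A →+* A)
  | 0 => RingHom.id A
  | n + 1 => φ.comp (iterHom φ n)

/-- `prIdeal φ I r = I · φ(I) ⋯ φ^(r-1)(I)` (the ideal `I_r`), with `prIdeal φ I 0 = (1)`. -/
def prIdeal {A : Type*} [CommRing A] (φ : A →+* A) (I : Ideal A) : ℕ → Ideal A
  | 0 => ⊤
  | n + 1 => prIdeal φ I n * I.map (iterHom φ n)

open Ideal
open scoped nonZeroDivisors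

section Regular

variable {A : Type*} [CommRing A]

def IsRegularMod (x m : A) : Prop := ∀ a, m ∣ x * a → m ∣ a

namespace IsRegularMod

variable {x y m m₁ m₂ u v g a b : A}

theorem of_quotient (h : ∀ y : A ⧸ span {m}, Ideal.Quotient.mk _ x * y = 0 → y = 0) :
    IsRegularMod x m := by
  intro a ha
  have := h (Ideal.Quotient.mk _ a)
  simp only [← map_mul, Ideal.Quotient.eq_zero_iff_mem, mem_span_singleton] at this
  exact this ha

theorem mul (h₁ : IsRegularMod x m₁) (hm₁ : m₁ ∈ A⁰) (h₂ : IsRegularMod x m₂) :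
    IsRegularMod x (m₁ * m₂) := by
  rintro a ⟨b, hb⟩
  obtain ⟨c, rfl⟩ := h₁ a ⟨m₂ * b, by rw [hb, mul_assoc]⟩
  have hc : x * c = m₂ * b :=
    (mul_cancel_left_mem_nonZeroDivisors hm₁).mp (by linear_combination hb)
  obtain ⟨t, rfl⟩ := h₂ c ⟨b, hc⟩
  exact ⟨t, by ring⟩

theorem pow (h : IsRegularMod x m) (hm : m ∈ A⁰) (k : ℕ) : IsRegularMod x (m ^ k) := by
  induction k with
  | zero => exact fun a _ => by simp
  | succ k ih => rw [pow_succ]; exact ih.mul (pow_mem hm k) h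

theorem prod {ι : Type*} (s : Finset ι) {m : ι → A}
    (h : ∀ i ∈ s, IsRegularMod x (m i) ∧ m i ∈ A⁰) :
    IsRegularMod x (∏ i ∈ s, m i) :=
  (Finset.prod_induction m (fun n => IsRegularMod x n ∧ n ∈ A⁰)
    (fun _ _ h₁ h₂ => ⟨h₁.1.mul h₁.2 h₂.1, mul_mem h₁.2 h₂.2⟩)
    ⟨fun a _ => one_dvd a, one_mem _⟩ h).1

theorem of_dvd_sub_mul (h : IsRegularMod x m) (hv : IsUnit v) (hy : m ∣ y - x * v) :
    IsRegularMod y m := by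
  intro a ha
  have : m ∣ x * (v * a) := by
    have := dvd_sub ha (dvd_mul_of_dvd_left hy a)
    rwa [show y * a - (y - x * v) * a = x * (v * a) by ring] at this
  exact hv.dvd_mul_left.mp (h _ this)

theorem inf_le_mul (h : IsRegularMod x m) : span {m} ⊓ span {x} ≤ span {m} * span {x} := by
  intro z ⟨hm, hx⟩
  rw [SetLike.mem_coe, mem_span_singleton] at hm hx
  obtain ⟨c, rfl⟩ := hx
  obtain ⟨t, rfl⟩ := h c hm
  rw [span_singleton_mul_span_singleton, mem_span_singleton]
  exact ⟨t, by ring⟩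

theorem mem_nonZeroDivisors (h : IsRegularMod x m) (hm : m ∈ A⁰)
    (hsep : ∀ z, (∀ k, m ^ k ∣ z) → z = 0) : x ∈ A⁰ :=
  mem_nonZeroDivisors_iff_right.mpr fun z hz =>
    hsep z fun k => (h.pow hm k) z (by rw [mul_comm, hz]; exact dvd_zero _)

theorem isUnit_of_eq (h : IsRegularMod x g) (hg : g ∈ jacobson ⊥) (he : x = g * a + x * u * b) :
    IsUnit u := by
  obtain ⟨c, hc⟩ := h (1 - u * b) ⟨a, by linear_combination he⟩
  have := mem_jacobson_bot.mp hg (-c)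
  rw [show g * -c + 1 = u * b by linear_combination hc] at this
  exact isUnit_of_mul_isUnit_left this

theorem pow_add_mul_mem_nonZeroDivisors {f : A} {n : ℕ} (h : IsRegularMod x f) (hf : f ∈ A⁰)
    (hu : IsUnit u) (hn : n ≠ 0) (hsep : ∀ z, (∀ k, f ^ k ∣ z) → z = 0) :
    f ^ n + x * u ∈ A⁰ := by
  refine mem_nonZeroDivisors_iff_right.mpr fun z hz => hsep z fun k => ?_
  induction k generalizing z with
  | zero => simp
  | succ k ih =>
    obtain ⟨z', rfl⟩ : f ∣ z := hu.dvd_mul_left.mp <| h _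
      ⟨-(f ^ (n - 1) * z), by linear_combination hz + z * mul_pow_sub_one hn f⟩
    have hz' : z' * (f ^ n + x * u) = 0 :=
      (mul_left_mem_nonZeroDivisors_eq_zero_iff hf).mp (by rw [← hz]; ring)
    rw [pow_succ']
    exact mul_dvd_mul_left f (ih z' hz')

theorem pow_add_mul {f : A} {n : ℕ} (h : IsRegularMod x f) (hf : f ∈ A⁰) (hx : x ∈ A⁰) :
    IsRegularMod x (f ^ n + x * u) := by
  rintro a ⟨b, hb⟩
  obtain ⟨c, hc⟩ := h.pow hf n (a - u * b) ⟨b, by linear_combination hb⟩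
  have hbc : b = x * c :=
    (mul_cancel_left_mem_nonZeroDivisors (pow_mem hf n)).mp (by linear_combination -hb + x * hc)
  exact ⟨c, (mul_cancel_left_mem_nonZeroDivisors hx).mp (by rw [hbc] at hb; linear_combination hb)⟩

end IsRegularMod

theorem isUnit_add_of_mem_jacobson_bot {u x : A} (hu : IsUnit u) (hx : x ∈ jacobson ⊥) :
    IsUnit (u + x) := by
  obtain ⟨u, rfl⟩ := hu
  have := mem_jacobson_bot.mp hx ↑u⁻¹
  rw [show (u : A) + x = u * (x * ↑u⁻¹ + 1) by linear_combination (-x) * u.mul_inv]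
  exact u.isUnit.mul this

theorem exists_isUnit_dvd_pow_add_sub {x y u v g : A} {n : ℕ} (hx : x ∈ jacobson ⊥) (hn : 2 ≤ n)
    (hu : IsUnit u) (h : g ∣ y - x * v) : ∃ w, IsUnit w ∧ g ∣ y ^ n + x * u - x * w := by
  refine ⟨u + x * (x ^ (n - 2) * v ^ n),
    isUnit_add_of_mem_jacobson_bot hu (mul_mem_right _ _ hx), ?_⟩
  have hxn : x * (x * x ^ (n - 2)) = x ^ n := by
    rw [← pow_succ', ← pow_succ', show n - 2 + 1 + 1 = n by omega]
  rw [show y ^ n + x * u - x * (u + x * (x ^ (n - 2) * v ^ n)) = y ^ n - (x * v) ^ n by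
    linear_combination (-v ^ n) * hxn]
  exact h.trans (sub_dvd_pow_sub_pow y (x * v) n)

theorem IsHausdorff.eq_zero_of_forall_pow_dvd {M : Ideal A} [IsHausdorff M A] {g z : A}
    (hg : g ∈ M) (h : ∀ k, g ^ k ∣ z) : z = 0 := by
  refine IsHausdorff.haus ‹_› z fun k => ?_
  rw [SModEq.zero, smul_eq_mul, mul_top]
  obtain ⟨c, rfl⟩ := h k
  exact mul_mem_right _ _ (pow_mem_pow hg k)

end Regular

section Frobenius

variable {A : Type*} [CommRing A] {p : ℕ} {δ : A → A} {φ : A →+* A} {d : A}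

theorem iterHom_apply_map (n : ℕ) (x : A) : iterHom φ n (φ x) = iterHom φ (n + 1) x := by
  induction n with
  | zero => rfl
  | succ n ih => exact congrArg φ ih

theorem map_iterHom_span_singleton (n : ℕ) :
    (span {d}).map (iterHom φ n) = span {iterHom φ n d} := by
  rw [map_span, Set.image_singleton]

theorem prIdeal_span_singleton (n : ℕ) :
    prIdeal φ (span {d}) n = span {∏ k ∈ Finset.range n, iterHom φ k d} := by
  induction n with
  | zero => simp [prIdeal]
  | succ n ih =>
    rw [prIdeal, ih, map_iterHom_span_singleton, span_singleton_mul_span_singleton,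
      Finset.prod_range_succ]

variable (hφ : ∀ x, φ x = x ^ p + p * δ x)
include hφ

theorem iterHom_succ_apply_eq (n : ℕ) :
    iterHom φ (n + 1) d = iterHom φ n d ^ p + p * δ (iterHom φ n d) :=
  hφ _

theorem iterHom_mem {M : Ideal A} (hp : p ≠ 0) (hpM : (p : A) ∈ M) (hdM : d ∈ M) (n : ℕ) :
    iterHom φ n d ∈ M := by
  induction n with
  | zero => exact hdM
  | succ n ih =>
    rw [iterHom_succ_apply_eq hφ]
    exact add_mem (pow_mem_of_mem _ ih p (Nat.pos_of_ne_zero hp)) (mul_mem_right _ _ hpM)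

theorem isUnit_delta_iterHom (hp : p ≠ 0) (hdist : (p : A) ∈ span {d, φ d}) {n : ℕ}
    (hjac : iterHom φ n d ∈ jacobson ⊥) (hreg : IsRegularMod (p : A) (iterHom φ n d)) :
    IsUnit (δ (iterHom φ n d)) := by
  obtain ⟨a, b, hab⟩ := mem_span_pair.mp hdist
  have := congrArg (iterHom φ n) hab
  rw [map_add, map_mul, map_mul, map_natCast, iterHom_apply_map, iterHom_succ_apply_eq hφ] at this
  refine hreg.isUnit_of_eq hjac (a := iterHom φ n a + iterHom φ n d ^ (p - 1) * iterHom φ n b)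
    (b := iterHom φ n b) ?_
  linear_combination -this - iterHom φ n b * mul_pow_sub_one hp (iterHom φ n d)

theorem iterHom_mem_nonZeroDivisors_and_isRegularMod_and_isUnit {M : Ideal A} [IsAdicComplete M A]
    (hp : p ≠ 0) (hpM : (p : A) ∈ M) (hdM : d ∈ M) (hdist : (p : A) ∈ span {d, φ d})
    (hd : d ∈ A⁰) (hreg : IsRegularMod (p : A) d) (n : ℕ) :
    iterHom φ n d ∈ A⁰ ∧ IsRegularMod (p : A) (iterHom φ n d) ∧ IsUnit (δ (iterHom φ n d)) := by
  have hsep (i : ℕ) (z : A) : (∀ k, iterHom φ i d ^ k ∣ z) → z = 0 :=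
    IsHausdorff.eq_zero_of_forall_pow_dvd (iterHom_mem hφ hp hpM hdM i)
  have hjac (i : ℕ) : iterHom φ i d ∈ jacobson ⊥ :=
    IsAdicComplete.le_jacobson_bot M (iterHom_mem hφ hp hpM hdM i)
  have hp0 : (p : A) ∈ A⁰ := hreg.mem_nonZeroDivisors hd (hsep 0)
  induction n with
  | zero => exact ⟨hd, hreg, isUnit_delta_iterHom hφ hp hdist (hjac 0) hreg⟩
  | succ n ih =>
    obtain ⟨hf, hf_reg, hu⟩ := ih
    have hf'_reg : IsRegularMod (p : A) (iterHom φ (n + 1) d) := by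
      rw [iterHom_succ_apply_eq hφ]; exact hf_reg.pow_add_mul hf hp0
    refine ⟨?_, hf'_reg, isUnit_delta_iterHom hφ hp hdist (hjac _) hf'_reg⟩
    rw [iterHom_succ_apply_eq hφ]
    exact hf_reg.pow_add_mul_mem_nonZeroDivisors hf hu hp (hsep n)

theorem exists_isUnit_dvd_iterHom_sub (hp : 2 ≤ p) (hpjac : (p : A) ∈ jacobson ⊥)
    (hδ : ∀ n, IsUnit (δ (iterHom φ n d))) {j i : ℕ} (hji : j < i) :
    ∃ v, IsUnit v ∧ iterHom φ j d ∣ iterHom φ i d - p * v := by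
  induction i, hji using Nat.le_induction with
  | base =>
    refine ⟨δ (iterHom φ j d), hδ j, ?_⟩
    rw [iterHom_succ_apply_eq hφ, add_sub_cancel_right]
    exact dvd_pow_self _ (by omega)
  | succ i _ ih =>
    obtain ⟨v, -, hv⟩ := ih
    rw [iterHom_succ_apply_eq hφ]
    exact exists_isUnit_dvd_pow_add_sub hpjac hp (hδ i) hv

theorem isRegularMod_iterHom_mul_prod_pow (hp : 2 ≤ p) (hpjac : (p : A) ∈ jacobson ⊥)
    (hf : ∀ n, iterHom φ n d ∈ A⁰ ∧ IsRegularMod (p : A) (iterHom φ n d) ∧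
      IsUnit (δ (iterHom φ n d)))
    {r : ℕ} (hr : 1 ≤ r) :
    IsRegularMod (iterHom φ r d) (d * (∏ j ∈ Finset.range r, iterHom φ j d) ^ (p - 1)) := by
  have hreg {j : ℕ} (hj : j < r) : IsRegularMod (iterHom φ r d) (iterHom φ j d) := by
    obtain ⟨v, hv, hdvd⟩ := exists_isUnit_dvd_iterHom_sub hφ hp hpjac (fun n => (hf n).2.2) hj
    exact (hf j).2.1.of_dvd_sub_mul hv hdvd
  rw [← Finset.prod_pow]
  refine (hreg hr).mul (hf 0).1 (IsRegularMod.prod _ fun j hj => ?_)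
  exact ⟨(hreg (Finset.mem_range.mp hj)).pow (hf j).1 _, pow_mem (hf j).1 _⟩

end Frobenius

namespace Ideal.Quotient

variable {R : Type*} [CommRing R] {J K : Ideal R}

theorem injective_factor_prod_of_inf_le_mul (h : J ⊓ K ≤ J * K) :
    Function.Injective (fun x : R ⧸ J * K =>
      ((factor mul_le_left x, factor mul_le_right x) : (R ⧸ J) × (R ⧸ K))) := by
  intro x y hxy
  obtain ⟨a, rfl⟩ := mk_surjective x
  obtain ⟨b, rfl⟩ := mk_surjective y
  simp only [factor_mk, Prod.mk.injEq, mk_eq_mk_iff_sub_mem] at hxy ⊢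
  exact h hxy

theorem factor_sup_eq_iff_exists (y : (R ⧸ J) × (R ⧸ K)) :
    factor (le_sup_left : J ≤ J ⊔ K) y.1 = factor (le_sup_right : K ≤ J ⊔ K) y.2 ↔
      ∃ x : R ⧸ J * K, factor mul_le_left x = y.1 ∧ factor mul_le_right x = y.2 := by
  constructor
  · obtain ⟨⟨a, b⟩, rfl⟩ : ∃ c : R × R, (mk J c.1, mk K c.2) = y :=
      ⟨(_, _), Prod.ext (mk_out y.1) (mk_out y.2)⟩
    rw [factor_mk, factor_mk, mk_eq_mk_iff_sub_mem]
    intro h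
    obtain ⟨j, hj, k, hk, hjk⟩ := Submodule.mem_sup.mp h
    refine ⟨mk _ (a - j), ?_, ?_⟩ <;> rw [factor_mk, mk_eq_mk_iff_sub_mem]
    · simpa using neg_mem hj
    · rwa [show a - j - b = k by linear_combination -hjk]
  · rintro ⟨x, h₁, h₂⟩
    obtain ⟨c, rfl⟩ := mk_surjective x
    rw [← h₁, ← h₂]
    simp only [factor_mk]

end Ideal.Quotient

theorem statement4_general
    (p : ℕ) (hp : p.Prime) {A : Type*} [CommRing A]
    (δ : A → A) (φ : A →+* A) (I : Ideal A) (d : A)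
    (hdgen : I = Ideal.span {d}) (hdnz : d ∈ nonZeroDivisors A)
    (hφ : ∀ x : A, φ x = x ^ p + (p : A) * δ x)
    (hcomplete : IsAdicComplete (Ideal.span {(p : A)} ⊔ I) A)
    (hdist : (p : A) ∈ I ⊔ I.map φ)
    (htrans : ∀ x : A ⧸ I, (p : A ⧸ I) * x = 0 → x = 0)
    (r : ℕ) (hr : 1 ≤ r) :
    Function.Injective (fun x : A ⧸ ((I * (prIdeal φ I r) ^ (p - 1)) * I.map (iterHom φ r)) =>
      ((Ideal.Quotient.factor (Ideal.mul_le_left) x,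
        Ideal.Quotient.factor (Ideal.mul_le_right) x) :
          (A ⧸ (I * (prIdeal φ I r) ^ (p - 1))) × (A ⧸ I.map (iterHom φ r)))) ∧
    ∀ y : (A ⧸ (I * (prIdeal φ I r) ^ (p - 1))) × (A ⧸ I.map (iterHom φ r)),
      (Ideal.Quotient.factor
          (le_sup_left : I * (prIdeal φ I r) ^ (p - 1) ≤
            I * (prIdeal φ I r) ^ (p - 1) ⊔ I.map (iterHom φ r)) y.1 =
        Ideal.Quotient.factor
          (le_sup_right : I.map (iterHom φ r) ≤
            I * (prIdeal φ I r) ^ (p - 1) ⊔ I.map (iterHom φ r)) y.2) ↔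
      ∃ x : A ⧸ ((I * (prIdeal φ I r) ^ (p - 1)) * I.map (iterHom φ r)),
        Ideal.Quotient.factor (Ideal.mul_le_left) x = y.1 ∧
        Ideal.Quotient.factor (Ideal.mul_le_right) x = y.2 := by
  subst hdgen
  refine ⟨Ideal.Quotient.injective_factor_prod_of_inf_le_mul ?_,
    Ideal.Quotient.factor_sup_eq_iff_exists⟩
  have hpM : (p : A) ∈ span {(p : A)} ⊔ span {d} := mem_sup_left (mem_span_singleton_self _)
  have hdM : d ∈ span {(p : A)} ⊔ span {d} := mem_sup_right (mem_span_singleton_self _)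
  rw [map_span, Set.image_singleton, ← span_insert] at hdist
  have hreg : IsRegularMod (p : A) d :=
    .of_quotient fun y => by rw [map_natCast]; exact htrans y
  have hf := iterHom_mem_nonZeroDivisors_and_isRegularMod_and_isUnit hφ hp.ne_zero hpM hdM
    hdist hdnz hreg
  have hinf := (isRegularMod_iterHom_mul_prod_pow hφ hp.two_le
    (IsAdicComplete.le_jacobson_bot _ hpM) hf hr).inf_le_mul
  rwa [← span_singleton_mul_span_singleton, ← span_singleton_pow, ← prIdeal_span_singleton,
    ← map_iterHom_span_singleton] at hinf

/-- For a transversal prism `(A,I)` and `r ≥ 1`, with `I_r = I·φ(I)⋯φ^(r-1)(I)` and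
`J_r = I·I_r^(p-1)`, the square of rings with vertices `A/(J_r·(φ^r)(I))`, `A/J_r`,
`A/(φ^r)(I)`, `A/(J_r + (φ^r)(I))` is Cartesian. -/
theorem statement4
    (p : ℕ) (hp : p.Prime) {A : Type*} [CommRing A]
    (δ : A → A) (φ : A →+* A) (I : Ideal A) (d : A)
    (hdgen : I = Ideal.span {d}) (hdnz : d ∈ nonZeroDivisors A)
    (hφ : ∀ x : A, φ x = x ^ p + (p : A) * δ x)
    (hδ1 : δ 1 = 0)
    (hδadd : ∀ x y : A, δ (x + y) =
      δ x + δ y - ∑ i ∈ Finset.Ioo 0 p, ((p.choose i / p : ℕ) : A) * x ^ i * y ^ (p - i))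
    (hδmul : ∀ x y : A, δ (x * y) =
      x ^ p * δ y + y ^ p * δ x + (p : A) * δ x * δ y)
    (hcomplete : IsAdicComplete (Ideal.span {(p : A)} ⊔ I) A)
    (hdist : (p : A) ∈ I ⊔ I.map φ)
    (htrans : ∀ x : A ⧸ I, (p : A ⧸ I) * x = 0 → x = 0)
    (r : ℕ) (hr : 1 ≤ r) :
    Function.Injective (fun x : A ⧸ ((I * (prIdeal φ I r) ^ (p - 1)) * I.map (iterHom φ r)) =>
      ((Ideal.Quotient.factor (Ideal.mul_le_left) x,
        Ideal.Quotient.factor (Ideal.mul_le_right) x) :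
          (A ⧸ (I * (prIdeal φ I r) ^ (p - 1))) × (A ⧸ I.map (iterHom φ r)))) ∧
    ∀ y : (A ⧸ (I * (prIdeal φ I r) ^ (p - 1))) × (A ⧸ I.map (iterHom φ r)),
      (Ideal.Quotient.factor
          (le_sup_left : I * (prIdeal φ I r) ^ (p - 1) ≤
            I * (prIdeal φ I r) ^ (p - 1) ⊔ I.map (iterHom φ r)) y.1 =
        Ideal.Quotient.factor
          (le_sup_right : I.map (iterHom φ r) ≤
            I * (prIdeal φ I r) ^ (p - 1) ⊔ I.map (iterHom φ r)) y.2) ↔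
      ∃ x : A ⧸ ((I * (prIdeal φ I r) ^ (p - 1)) * I.map (iterHom φ r)),
        Ideal.Quotient.factor (Ideal.mul_le_left) x = y.1 ∧
        Ideal.Quotient.factor (Ideal.mul_le_right) x = y.2 :=
  statement4_general p hp δ φ I d hdgen hdnz hφ hcomplete hdist htrans r hr
end

section
/- Let (A, I) be a transversal prism with Frobenius φ. For every x ∈ I and r ≥ 1, one has φ^r(x) ≡ p·φ^{r-1}(δ(x)) modulo the ideal J_r + p·(φ^{r-1})(I), where J_r = I·(I·φ(I)···φ^{r-1}(I))^{p-1}. -/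
lemma iterHom_apply_succ {A : Type*} [CommRing A] (φ : A →+* A) (n : ℕ) (x : A) :
    iterHom φ (n + 1) x = φ (iterHom φ n x) := rfl

lemma iterHom_succ' {A : Type*} [CommRing A] (φ : A →+* A) (n : ℕ) (x : A) :
    iterHom φ (n + 1) x = iterHom φ n (φ x) := by
  induction n with
  | zero => rfl
  | succ n ih =>
      rw [iterHom_apply_succ, ih, ← iterHom_apply_succ]

lemma prod_mem_prIdeal {A : Type*} [CommRing A] (φ : A →+* A) (I : Ideal A) (d : A)
    (hd : d ∈ I) (n : ℕ) :
    (∏ k ∈ Finset.range n, iterHom φ k d) ∈ prIdeal φ I n := by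
  induction n with
  | zero => simp [prIdeal]
  | succ n ih =>
      rw [Finset.prod_range_succ]
      exact Ideal.mul_mem_mul ih (Ideal.mem_map_of_mem _ hd)

lemma key_identity {A : Type*} [CommRing A] (φ : A →+* A) (δ : A → A) (d : A) (q : ℕ)
    (hφd : φ d = d ^ (q + 2) + ((q + 2 : ℕ) : A) * δ d) (s : ℕ) :
    ∃ g h : A, (iterHom φ s d) ^ (q + 2) =
      d * (∏ k ∈ Finset.range (s + 1), iterHom φ k d) ^ (q + 1) * g
      + ((q + 2 : ℕ) : A) * iterHom φ s d * h := by
  induction s with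
  | zero =>
      refine ⟨1, 0, ?_⟩
      rw [show (0:ℕ)+1 = 1 from rfl, Finset.prod_range_one]
      show d ^ (q + 2) = d * d ^ (q + 1) * 1 + ((q + 2 : ℕ) : A) * d * 0
      ring
  | succ s ih =>
      obtain ⟨g, h, ih⟩ := ih
      have happ := congrArg φ ih
      simp only [map_add, map_mul, map_pow, map_natCast, map_prod] at happ
      have hiter : ∀ k : ℕ, φ (iterHom φ k d) = iterHom φ (k + 1) d := fun _ => rfl
      simp only [hiter] at happ
      have hQ : (∏ k ∈ Finset.range (s + 1), iterHom φ (k + 1) d)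
          = (∏ k ∈ Finset.range s, iterHom φ (k + 1) d) * iterHom φ (s + 1) d :=
        Finset.prod_range_succ _ _
      have hP : (∏ k ∈ Finset.range (s + 2), iterHom φ k d)
          = (∏ k ∈ Finset.range (s + 1), iterHom φ (k + 1) d) * iterHom φ 0 d :=
        Finset.prod_range_succ' _ _
      have h0 : iterHom φ 0 d = d := rfl
      refine ⟨φ g, δ d * (∏ k ∈ Finset.range s, iterHom φ (k + 1) d) ^ (q + 1)
        * (iterHom φ (s + 1) d) ^ q * φ g + φ h, ?_⟩
      rw [hP, h0, happ, hφd, hQ]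
      ring

/-- For a transversal prism `(A,I)`, every `x ∈ I` and every `r ≥ 1` (written `r = s + 1`),
one has `φ^r(x) ≡ p·φ^(r-1)(δ(x))` modulo the ideal `J_r + p·(φ^(r-1))(I)`,
where `J_r = I·(I·φ(I)⋯φ^(r-1)(I))^(p-1)`. -/
theorem statement6
    (p : ℕ) (hp : p.Prime) {A : Type*} [CommRing A]
    (δ : A → A) (φ : A →+* A) (I : Ideal A) (d : A)
    (hdgen : I = Ideal.span {d}) (hdnz : d ∈ nonZeroDivisors A)
    (hφ : ∀ x : A, φ x = x ^ p + (p : A) * δ x)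
    (hδ1 : δ 1 = 0)
    (hδadd : ∀ x y : A, δ (x + y) =
      δ x + δ y - ∑ i ∈ Finset.Ioo 0 p, ((p.choose i / p : ℕ) : A) * x ^ i * y ^ (p - i))
    (hδmul : ∀ x y : A, δ (x * y) =
      x ^ p * δ y + y ^ p * δ x + (p : A) * δ x * δ y)
    (hcomplete : IsAdicComplete (Ideal.span {(p : A)} ⊔ I) A)
    (hdist : (p : A) ∈ I ⊔ I.map φ)
    (htrans : ∀ x : A ⧸ I, (p : A ⧸ I) * x = 0 → x = 0) :
    ∀ s : ℕ, ∀ x ∈ I,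
      iterHom φ (s + 1) x - (p : A) * iterHom φ s (δ x) ∈
        (I * (prIdeal φ I (s + 1)) ^ (p - 1)) ⊔
          (Ideal.span {(p : A)} * I.map (iterHom φ s)) := by
  obtain ⟨q, rfl⟩ : ∃ q, p = q + 2 := ⟨p - 2, by have := hp.two_le; omega⟩
  intro s x hx
  have hd : d ∈ I := by rw [hdgen]; exact Ideal.mem_span_singleton_self d
  -- the difference equals (φ^s x)^p
  have hdiff : iterHom φ (s + 1) x - ((q + 2 : ℕ) : A) * iterHom φ s (δ x)
      = (iterHom φ s x) ^ (q + 2) := by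
    rw [iterHom_succ', hφ]
    simp only [map_add, map_mul, map_pow, map_natCast]
    ring
  rw [hdiff]
  obtain ⟨a, rfl⟩ : ∃ a, x = d * a := by
    rw [hdgen, Ideal.mem_span_singleton] at hx; exact hx
  obtain ⟨g, h, hk⟩ := key_identity φ δ d q (hφ d) s
  have hexp : (iterHom φ s (d * a)) ^ (q + 2)
      = (d * (∏ k ∈ Finset.range (s + 1), iterHom φ k d) ^ (q + 1)
          * (g * (iterHom φ s a) ^ (q + 2)))
        + (((q + 2 : ℕ) : A) * iterHom φ s d * (h * (iterHom φ s a) ^ (q + 2))) := by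
    rw [map_mul, mul_pow, hk]; ring
  rw [hexp]
  have h1 : q + 2 - 1 = q + 1 := rfl
  rw [h1]
  refine Submodule.add_mem_sup ?_ ?_
  · exact Ideal.mul_mem_right _ _
      (Ideal.mul_mem_mul hd (Ideal.pow_mem_pow (prod_mem_prIdeal φ I d hd (s + 1)) _))
  · exact Ideal.mul_mem_right _ _
      (Ideal.mul_mem_mul (Ideal.mem_span_singleton_self _) (Ideal.mem_map_of_mem _ hd))
end
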